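/- Let B and τ be as given. Then: (i) σ₁ and σ₃ are algebraically independent over ℤ in B, and the ℤ[σ₁,σ₃]-submodule of B generated by 1 and p is free with basis {1, p}; (ii) the fixed subring B^⟨τ⟩ = {x ∈ B : τ(x) = x} consists exactly of the elements of the form f(σ₁,σ₃)·1 + g(σ₁,σ₃)·p, where f, g ∈ ℤ[S,T] are such that every monomial S^aT^b occurring in f has a+3b even and every monomial S^aT^b occurring in g has a+3b odd. Equivalently, giving B the grading with each z_i of degree 1 (so deg σ₁ = 1, deg σ₃ = 3, deg p = 3), B^⟨τ⟩ is the even-degree part of the free ℤ[σ₁,σ₃]-module ℤ[σ₁,σ₃]·1 ⊕ ℤ[σ₁,σ₃]·p. -/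

import Mathlib

/-!
Since `σ₂ = 0`, `z₃` is a root of `Z³ - σ₁Z² - σ₃`, and `z₁, z₂` are the roots of
`X² - (σ₁ - z₃)X - (σ₁ - z₃)z₃`. Adjoining these roots successively to `ℤ[S, T]` gives a ring
isomorphic to `B` (with `S, T ↦ σ₁, σ₃`) that is free over `ℤ[S, T]` with basis `z₃ⁱ z₁ʲ`
(`i < 3`, `j < 2`). In this basis `p` has coordinates `(0, S², -S, 0, -2S, 3)`, which gives (i).

The square of `τ` is the `ℤ[S, T]`-linear cyclic permutation `z₁ ↦ z₂ ↦ z₃ ↦ z₁`. Solving its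
fixed-point equations in coordinates shows that its invariants are exactly `ℤ[S, T] ⊕ ℤ[S, T]·p`,
the coefficient `3` of `p` being matched by the primality of `3` in `ℤ[S, T]`. Finally `τ` maps
`f(σ₁, σ₃) + g(σ₁, σ₃)·p` to `f(-σ₁, -σ₃) - g(-σ₁, -σ₃)·p`, so by freeness `τ`-invariance means
that `f` has only monomials of even weighted degree and `g` only monomials of odd weighted degree.
-/

open MvPolynomial

/-- The ring `B = ℤ[z₁,z₂,z₃]/(z₁z₂+z₂z₃+z₃z₁)`. -/
noncomputable abbrev Bring : Type :=
  MvPolynomial (Fin 3) ℤ ⧸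
    (Ideal.span {(X 0 * X 1 + X 1 * X 2 + X 2 * X 0 : MvPolynomial (Fin 3) ℤ)})

/-- The images `z₁, z₂, z₃` of the variables in `B`. -/
noncomputable def zB (i : Fin 3) : Bring :=
  Ideal.Quotient.mk _ (X i)

/-- `σ₁ = z₁ + z₂ + z₃`. -/
noncomputable def σ₁B : Bring := zB 0 + zB 1 + zB 2

/-- `σ₃ = z₁z₂z₃`. -/
noncomputable def σ₃B : Bring := zB 0 * zB 1 * zB 2

/-- `p = z₁²z₂ + z₂²z₃ + z₃²z₁`. -/
noncomputable def pB : Bring := zB 0 ^ 2 * zB 1 + zB 1 ^ 2 * zB 2 + zB 2 ^ 2 * zB 0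

/-- Evaluation `ℤ[S,T] → B`, `S ↦ σ₁`, `T ↦ σ₃`. -/
noncomputable def evB (f : MvPolynomial (Fin 2) ℤ) : Bring :=
  MvPolynomial.aeval ![σ₁B, σ₃B] f

namespace MvPolynomial

variable {σ R : Type*} [CommRing R]

noncomputable def negVars : MvPolynomial σ R →ₐ[R] MvPolynomial σ R := aeval fun i => -X i

theorem negVars_monomial (m : σ →₀ ℕ) (c : R) :
    negVars (monomial m c) = monomial m ((-1) ^ m.degree * c) := by
  have hX (i : σ) (k : ℕ) : (-X i : MvPolynomial σ R) ^ k = C ((-1) ^ k) * X i ^ k := by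
    rw [neg_pow, map_pow, map_neg, map_one]
  rw [negVars, aeval_monomial, monomial_eq, algebraMap_eq]
  simp only [hX, Finsupp.prod_mul]
  rw [Finsupp.degree_apply, Finsupp.prod, ← map_prod, Finset.prod_pow_eq_pow_sum, C_mul]
  ring

theorem coeff_negVars (f : MvPolynomial σ R) (m : σ →₀ ℕ) :
    coeff m (negVars f) = (-1) ^ m.degree * coeff m f := by
  classical
  induction f using induction_on' with
  | monomial n c =>
    rw [negVars_monomial, coeff_monomial, coeff_monomial]
    split_ifs with h <;> simp [h]
  | add p q hp hq => rw [map_add, coeff_add, coeff_add, hp, hq, mul_add]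

theorem negVars_eq_self_iff [IsAddTorsionFree R] {f : MvPolynomial σ R} :
    negVars f = f ↔ ∀ m ∈ f.support, Even m.degree := by
  simp only [MvPolynomial.ext_iff, coeff_negVars, mem_support_iff]
  refine forall_congr' fun m => ?_
  rcases Nat.even_or_odd m.degree with h | h
  · simp [h.neg_one_pow, h]
  · rw [h.neg_one_pow, neg_one_mul, neg_eq_iff_add_eq_zero, ← two_nsmul, smul_eq_zero]
    simp [Nat.not_even_iff_odd.2 h]

theorem negVars_eq_neg_iff [IsAddTorsionFree R] {f : MvPolynomial σ R} :
    negVars f = -f ↔ ∀ m ∈ f.support, Odd m.degree := by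
  simp only [MvPolynomial.ext_iff, coeff_negVars, coeff_neg, mem_support_iff]
  refine forall_congr' fun m => ?_
  rcases Nat.even_or_odd m.degree with h | h
  · rw [h.neg_one_pow, one_mul, eq_neg_iff_add_eq_zero, ← two_nsmul, smul_eq_zero]
    simp [Nat.not_odd_iff_even.2 h]
  · simp [h.neg_one_pow, h]

theorem aeval_negVars {S : Type*} [CommRing S] [Algebra R S] (v : σ → S) (f : MvPolynomial σ R) :
    aeval v (negVars f) = aeval (-v) f := by
  rw [negVars, ← AlgHom.comp_apply, comp_aeval]
  simp only [map_neg, aeval_X, Pi.neg_def]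

theorem C_dvd_of_C_dvd_X_mul {r : R} (hr : Prime r) {i : σ} {f : MvPolynomial σ R}
    (h : C r ∣ X i * f) : C r ∣ f :=
  (((prime_C_iff σ).2 hr).dvd_or_dvd h).resolve_left fun hX =>
    hr.not_isUnit <| isUnit_of_dvd_one <| by
      simpa using (C_dvd_iff_dvd_coeff r _).1 hX (Finsupp.single i 1)

end MvPolynomial

noncomputable section

namespace Bring

abbrev Base : Type := MvPolynomial (Fin 2) ℤ

def cubic : Polynomial Base :=
  Polynomial.X ^ 3 - Polynomial.C (X 0) * Polynomial.X ^ 2 - Polynomial.C (X 1)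

theorem cubic_monic : cubic.Monic := by unfold cubic; monicity!

theorem natDegree_cubic : cubic.natDegree = 3 := by unfold cubic; compute_degree!

abbrev Cubic : Type := AdjoinRoot cubic

instance : Nontrivial Cubic :=
  AdjoinRoot.nontrivial cubic <| by
    rw [Polynomial.degree_eq_natDegree cubic_monic.ne_zero, natDegree_cubic]; decide

def quadratic : Polynomial Cubic :=
  Polynomial.X ^ 2 - Polynomial.C (AdjoinRoot.of cubic (X 0) - AdjoinRoot.root cubic) * Polynomial.X
    - Polynomial.C ((AdjoinRoot.of cubic (X 0) - AdjoinRoot.root cubic) * AdjoinRoot.root cubic)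

theorem quadratic_monic : quadratic.Monic := by unfold quadratic; monicity!

theorem natDegree_quadratic : quadratic.natDegree = 2 := by unfold quadratic; compute_degree!

abbrev Model : Type := AdjoinRoot quadratic

namespace Model

abbrev ofBase : Base →+* Model := algebraMap Base Model

def z₁ : Model := AdjoinRoot.root quadratic

def z₃ : Model := algebraMap Cubic Model (AdjoinRoot.root cubic)

theorem z₃_cube : z₃ ^ 3 = ofBase (X 0) * z₃ ^ 2 + ofBase (X 1) := by
  have h : AdjoinRoot.mk cubic cubic = 0 := AdjoinRoot.mk_self
  conv at h => lhs; arg 2; unfold cubic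
  simp only [map_sub, map_mul, map_pow, AdjoinRoot.mk_X, AdjoinRoot.mk_C] at h
  have h' := congrArg (algebraMap Cubic Model) h
  simp only [map_sub, map_mul, map_pow, map_zero, ← AdjoinRoot.algebraMap_eq,
    ← IsScalarTower.algebraMap_apply] at h'
  rw [z₃]
  linear_combination h'

theorem z₁_sq : z₁ ^ 2 = (ofBase (X 0) - z₃) * (z₁ + z₃) := by
  have h : AdjoinRoot.mk quadratic quadratic = 0 := AdjoinRoot.mk_self
  conv at h => lhs; arg 2; unfold quadratic
  simp only [map_sub, map_mul, map_pow, AdjoinRoot.mk_X, AdjoinRoot.mk_C,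
    ← AdjoinRoot.algebraMap_eq, ← IsScalarTower.algebraMap_apply] at h
  rw [z₁, z₃]
  linear_combination h

def basis : Module.Basis (Fin 3 × Fin 2) Base Model :=
  ((AdjoinRoot.powerBasis' cubic_monic).basis.reindex (finCongr natDegree_cubic)).smulTower
    ((AdjoinRoot.powerBasis' quadratic_monic).basis.reindex (finCongr natDegree_quadratic))

theorem basis_apply (i : Fin 3) (j : Fin 2) : basis (i, j) = z₃ ^ (i : ℕ) * z₁ ^ (j : ℕ) := by
  simp only [basis, Module.Basis.smulTower_apply, Module.Basis.coe_reindex, PowerBasis.coe_basis,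
    AdjoinRoot.powerBasis'_gen, Function.comp_apply, Algebra.smul_def, AdjoinRoot.algebraMap_eq,
    map_pow, z₃, z₁]
  rfl

def ofCoords (c₀ c₁ c₂ d₀ d₁ d₂ : Base) : Model :=
  ofBase c₀ + ofBase c₁ * z₃ + ofBase c₂ * z₃ ^ 2
    + (ofBase d₀ + ofBase d₁ * z₃ + ofBase d₂ * z₃ ^ 2) * z₁

theorem ofCoords_eq_equivFun_symm (c₀ c₁ c₂ d₀ d₁ d₂ : Base) :
    ofCoords c₀ c₁ c₂ d₀ d₁ d₂ =
      basis.equivFun.symm fun ij => ![![c₀, d₀], ![c₁, d₁], ![c₂, d₂]] ij.1 ij.2 := by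
  simp only [ofCoords, Module.Basis.equivFun_symm_apply, Algebra.smul_def, Fintype.sum_prod_type,
    basis_apply, Fin.sum_univ_two, Fin.sum_univ_three, Matrix.cons_val', Matrix.cons_val_fin_one,
    Matrix.cons_val_zero, Matrix.cons_val_one, Matrix.cons_val, Fin.coe_ofNat_eq_mod, Nat.zero_mod,
    Nat.one_mod, Nat.mod_succ, pow_zero, pow_one, mul_one, one_mul]
  ring

theorem ofCoords_injective {c₀ c₁ c₂ d₀ d₁ d₂ c₀' c₁' c₂' d₀' d₁' d₂' : Base}
    (h : ofCoords c₀ c₁ c₂ d₀ d₁ d₂ = ofCoords c₀' c₁' c₂' d₀' d₁' d₂') :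
    c₀ = c₀' ∧ c₁ = c₁' ∧ c₂ = c₂' ∧ d₀ = d₀' ∧ d₁ = d₁' ∧ d₂ = d₂' := by
  simp only [ofCoords_eq_equivFun_symm] at h
  have h' := basis.equivFun.symm.injective h
  exact ⟨congrFun h' (0, 0), congrFun h' (1, 0), congrFun h' (2, 0),
    congrFun h' (0, 1), congrFun h' (1, 1), congrFun h' (2, 1)⟩

theorem exists_eq_ofCoords (v : Model) :
    ∃ c₀ c₁ c₂ d₀ d₁ d₂ : Base, v = ofCoords c₀ c₁ c₂ d₀ d₁ d₂ := by
  obtain ⟨w, rfl⟩ := basis.equivFun.symm.surjective v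
  refine ⟨w (0, 0), w (1, 0), w (2, 0), w (0, 1), w (1, 1), w (2, 1), ?_⟩
  rw [ofCoords_eq_equivFun_symm]
  congr
  ext ⟨i, j⟩
  fin_cases i <;> fin_cases j <;> rfl

end Model

open Model

theorem zB_relation : zB 0 * zB 1 + zB 1 * zB 2 + zB 2 * zB 0 = 0 :=
  Ideal.Quotient.eq_zero_iff_mem.2 (Ideal.subset_span rfl)

theorem evB_X_zero : evB (X 0) = σ₁B := aeval_X _ _

theorem evB_X_one : evB (X 1) = σ₃B := aeval_X _ _

def evBHom : Base →+* Bring := (aeval ![σ₁B, σ₃B]).toRingHom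

theorem evBHom_apply (f : Base) : evBHom f = evB f := rfl

theorem map_evB {A : Type*} [CommRing A] (φ : Bring →+* A) (f : Base) :
    φ (evB f) = aeval ![φ σ₁B, φ σ₃B] f :=
  (comp_aeval_apply _ φ.toIntAlgHom f).trans <| by
    congr
    funext i
    fin_cases i <;> rfl

def toModel : Bring →+* Model :=
  Ideal.Quotient.lift _ (aeval ![z₁, ofBase (X 0) - z₁ - z₃, z₃]).toRingHom fun a ha => by
    obtain ⟨c, rfl⟩ := Ideal.mem_span_singleton'.1 ha
    simp only [AlgHom.toRingHom_eq_coe, RingHom.coe_coe, map_mul, map_add, aeval_X,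
      Matrix.cons_val_zero, Matrix.cons_val_one, Matrix.cons_val]
    linear_combination (-aeval ![z₁, ofBase (X 0) - z₁ - z₃, z₃] c) * z₁_sq

theorem toModel_zB_zero : toModel (zB 0) = z₁ := by simp [toModel, zB]

theorem toModel_zB_one : toModel (zB 1) = ofBase (X 0) - z₁ - z₃ := by simp [toModel, zB]

theorem toModel_zB_two : toModel (zB 2) = z₃ := by simp [toModel, zB]

theorem toModel_σ₁B : toModel σ₁B = ofBase (X 0) := by
  rw [σ₁B, map_add, map_add, toModel_zB_zero, toModel_zB_one, toModel_zB_two]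
  ring

theorem toModel_σ₃B : toModel σ₃B = ofBase (X 1) := by
  rw [σ₃B, map_mul, map_mul, toModel_zB_zero, toModel_zB_one, toModel_zB_two]
  linear_combination (-z₃) * z₁_sq + z₃_cube

theorem toModel_evB (f : Base) : toModel (evB f) = ofBase f := by
  suffices toModel.comp evBHom = ofBase from congr($this f)
  refine MvPolynomial.ringHom_ext (fun r => by simp) fun i => ?_
  fin_cases i
  · exact (congrArg toModel evB_X_zero).trans toModel_σ₁B
  · exact (congrArg toModel evB_X_one).trans toModel_σ₃B

theorem toModel_pB : toModel pB = ofCoords 0 (X 0 ^ 2) (-X 0) 0 (-2 * X 0) 3 := by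
  simp only [pB, ofCoords, map_add, map_mul, map_pow, map_neg, map_zero, map_ofNat,
    toModel_zB_zero, toModel_zB_one, toModel_zB_two]
  linear_combination (z₃ - z₁) * z₁_sq

theorem toModel_evB_add_evB_mul_pB (f g : Base) :
    toModel (evB f + evB g * pB) =
      ofCoords f (X 0 ^ 2 * g) (-X 0 * g) 0 (-2 * X 0 * g) (3 * g) := by
  rw [map_add, map_mul, toModel_evB, toModel_evB, toModel_pB, ofCoords, ofCoords]
  simp only [map_mul, map_neg, map_pow, map_zero, map_ofNat]
  ring

theorem cubic_eval₂_zB_two : cubic.eval₂ evBHom (zB 2) = 0 := by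
  simp only [cubic, Polynomial.eval₂_sub, Polynomial.eval₂_mul, Polynomial.eval₂_X_pow,
    Polynomial.eval₂_C, evBHom_apply, evB_X_zero, evB_X_one, σ₁B, σ₃B]
  linear_combination (-zB 2) * zB_relation

def ofCubic : Cubic →+* Bring := AdjoinRoot.lift evBHom (zB 2) cubic_eval₂_zB_two

theorem ofCubic_of (f : Base) : ofCubic (AdjoinRoot.of cubic f) = evB f := AdjoinRoot.lift_of _

theorem ofCubic_root : ofCubic (AdjoinRoot.root cubic) = zB 2 := AdjoinRoot.lift_root _

theorem quadratic_eval₂_zB_zero : quadratic.eval₂ ofCubic (zB 0) = 0 := by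
  simp only [quadratic, Polynomial.eval₂_sub, Polynomial.eval₂_mul, Polynomial.eval₂_X_pow,
    Polynomial.eval₂_X, Polynomial.eval₂_C, map_sub, map_mul, ofCubic_of, ofCubic_root,
    evB_X_zero, σ₁B]
  linear_combination (-1 : Bring) * zB_relation

def ofModel : Model →+* Bring := AdjoinRoot.lift ofCubic (zB 0) quadratic_eval₂_zB_zero

theorem ofModel_ofBase (f : Base) : ofModel (ofBase f) = evB f := by
  rw [ofBase, AdjoinRoot.algebraMap_eq', RingHom.comp_apply, AdjoinRoot.algebraMap_eq, ofModel,
    AdjoinRoot.lift_of, ofCubic_of]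

theorem ofModel_z₁ : ofModel z₁ = zB 0 := AdjoinRoot.lift_root _

theorem ofModel_z₃ : ofModel z₃ = zB 2 := by
  rw [z₃, AdjoinRoot.algebraMap_eq, ofModel, AdjoinRoot.lift_of, ofCubic_root]

theorem ofModel_toModel (b : Bring) : ofModel (toModel b) = b := by
  suffices ofModel.comp toModel = RingHom.id Bring from congr($this b)
  refine Ideal.Quotient.ringHom_ext (MvPolynomial.ringHom_ext (fun r => by simp) fun i => ?_)
  fin_cases i
  · change ofModel (toModel (zB 0)) = zB 0
    rw [toModel_zB_zero, ofModel_z₁]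
  · change ofModel (toModel (zB 1)) = zB 1
    rw [toModel_zB_one, map_sub, map_sub, ofModel_ofBase, evB_X_zero, ofModel_z₁, ofModel_z₃, σ₁B]
    ring
  · change ofModel (toModel (zB 2)) = zB 2
    rw [toModel_zB_two, ofModel_z₃]

theorem toModel_injective : Function.Injective toModel :=
  Function.LeftInverse.injective ofModel_toModel

theorem eq_zero_of_evB_add_evB_mul_pB_eq_zero {f g : Base} (h : evB f + evB g * pB = 0) :
    f = 0 ∧ g = 0 := by
  have h0 : toModel (evB f + evB g * pB) = ofCoords 0 0 0 0 0 0 := by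
    rw [h, map_zero]
    simp [ofCoords]
  rw [toModel_evB_add_evB_mul_pB] at h0
  obtain ⟨hf, -, -, -, -, hg⟩ := ofCoords_injective h0
  exact ⟨hf, (mul_eq_zero.1 hg).resolve_left (by norm_num)⟩

theorem evB_add_evB_mul_pB_injective {f g f' g' : Base}
    (h : evB f + evB g * pB = evB f' + evB g' * pB) : f = f' ∧ g = g' := by
  have := eq_zero_of_evB_add_evB_mul_pB_eq_zero (f := f - f') (g := g - g')
    (by simp only [evB, map_sub] at h ⊢; linear_combination h)
  exact ⟨sub_eq_zero.1 this.1, sub_eq_zero.1 this.2⟩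

theorem algebraicIndependent_σ₁B_σ₃B : AlgebraicIndependent ℤ ![σ₁B, σ₃B] :=
  (injective_iff_map_eq_zero _).2 fun f hf =>
    (eq_zero_of_evB_add_evB_mul_pB_eq_zero (g := 0) (by simp [evB, hf])).1

section Cyclic

variable {ρ : Bring →+* Bring}
  (h₀ : ρ (zB 0) = zB 1) (h₁ : ρ (zB 1) = zB 2) (h₂ : ρ (zB 2) = zB 0)
include h₀ h₁ h₂

theorem map_evB_of_cyclic (f : Base) : ρ (evB f) = evB f := by
  have hσ₁ : ρ σ₁B = σ₁B := by rw [σ₁B, map_add, map_add, h₀, h₁, h₂]; ring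
  have hσ₃ : ρ σ₃B = σ₃B := by rw [σ₃B, map_mul, map_mul, h₀, h₁, h₂]; ring
  rw [map_evB, hσ₁, hσ₃]
  rfl

theorem toModel_map_ofModel_ofCoords_of_cyclic (c₀ c₁ c₂ d₀ d₁ d₂ : Base) :
    toModel (ρ (ofModel (ofCoords c₀ c₁ c₂ d₀ d₁ d₂))) =
      ofCoords (c₀ + X 0 * d₀) (X 0 * c₂ - d₀ - X 0 * d₁) (d₁ - c₂) (c₁ + X 0 * c₂ - d₀)
        (-c₂ - X 0 * d₂) d₂ := by
  simp only [ofCoords, map_add, map_mul, map_pow, map_sub, map_neg, ofModel_ofBase, ofModel_z₁,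
    ofModel_z₃, map_evB_of_cyclic h₀ h₁ h₂, h₀, h₂, toModel_evB, toModel_zB_zero, toModel_zB_one]
  linear_combination (ofBase c₂ - ofBase d₁ - ofBase d₂ * z₁) * z₁_sq

theorem exists_eq_evB_add_evB_mul_pB_of_cyclic {b : Bring} (hb : ρ b = b) :
    ∃ f g : Base, b = evB f + evB g * pB := by
  obtain ⟨c₀, c₁, c₂, d₀, d₁, d₂, hc⟩ := exists_eq_ofCoords (toModel b)
  have hfix := toModel_map_ofModel_ofCoords_of_cyclic h₀ h₁ h₂ c₀ c₁ c₂ d₀ d₁ d₂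
  rw [← hc, ofModel_toModel, hb, hc] at hfix
  obtain ⟨e₀, -, e₂, e₃, e₄, -⟩ := ofCoords_injective hfix
  have hd₀ : d₀ = 0 := (mul_eq_zero.1 (by linear_combination -e₀)).resolve_left (X_ne_zero 0)
  -- `e₂` and `e₄` say `3 c₂ = -S d₂`, and `3` is a prime of `ℤ[S, T]` not dividing `S`.
  obtain ⟨g, rfl⟩ : C 3 ∣ d₂ :=
    C_dvd_of_C_dvd_X_mul Int.prime_three ⟨-c₂, by rw [map_ofNat]; linear_combination e₄ + e₂⟩
  rw [map_ofNat] at e₄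
  have hc₂ : c₂ = -X 0 * g :=
    mul_left_cancel₀ (by norm_num : (3 : Base) ≠ 0) (by linear_combination e₄ + e₂)
  have hc₁ : c₁ = X 0 ^ 2 * g := by linear_combination -e₃ - X 0 * hc₂ + 2 * hd₀
  have hd₁ : d₁ = -2 * X 0 * g := by linear_combination 2 * hc₂ - e₂
  refine ⟨c₀, g, toModel_injective ?_⟩
  rw [hc, toModel_evB_add_evB_mul_pB, hc₁, hc₂, hd₀, hd₁, map_ofNat]

end Cyclic

theorem even_add_three_mul_iff_even_degree (m : Fin 2 →₀ ℕ) :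
    Even (m 0 + 3 * m 1) ↔ Even m.degree := by
  rw [Finsupp.degree_eq_sum, Fin.sum_univ_two]
  simp [Nat.even_add, Nat.even_mul, show ¬Even 3 by decide]

theorem negVars_eq_self_iff_even_weight {f : Base} :
    negVars f = f ↔ ∀ m ∈ f.support, Even (m 0 + 3 * m 1) := by
  simp only [negVars_eq_self_iff, even_add_three_mul_iff_even_degree]

theorem negVars_eq_neg_iff_odd_weight {f : Base} :
    negVars f = -f ↔ ∀ m ∈ f.support, Odd (m 0 + 3 * m 1) := by
  simp only [negVars_eq_neg_iff, ← Nat.not_even_iff_odd, even_add_three_mul_iff_even_degree]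

theorem evB_neg (f : Base) : evB (-f) = -evB f := map_neg _ f

section Involution

variable {τ : Bring →+* Bring}
  (h1 : τ (zB 0) = -zB 2) (h2 : τ (zB 1) = -zB 0) (h3 : τ (zB 2) = -zB 1)
include h1 h2 h3

theorem map_evB_eq_evB_negVars (f : Base) : τ (evB f) = evB (negVars f) := by
  have hσ₁ : τ σ₁B = -σ₁B := by rw [σ₁B, map_add, map_add, h1, h2, h3]; ring
  have hσ₃ : τ σ₃B = -σ₃B := by rw [σ₃B, map_mul, map_mul, h1, h2, h3]; ring
  rw [map_evB, hσ₁, hσ₃, evB, aeval_negVars, Matrix.neg_cons, Matrix.neg_cons, Matrix.neg_empty]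
  rfl

theorem map_pB_eq_neg : τ pB = -pB := by
  rw [pB, map_add, map_add, map_mul, map_mul, map_mul, map_pow, map_pow, map_pow, h1, h2, h3]
  ring

end Involution

end Bring

end

open Bring

/-- In `B = ℤ[z₁,z₂,z₃]/(z₁z₂+z₂z₃+z₃z₁)` with `τ` the automorphism
`z₁ ↦ −z₃, z₂ ↦ −z₁, z₃ ↦ −z₂`: (i) `σ₁, σ₃` are algebraically independent over `ℤ` and the
`ℤ[σ₁,σ₃]`-submodule generated by `1` and `p` is free with basis `{1, p}`; (ii) the fixed
subring of `τ` consists exactly of the elements `f(σ₁,σ₃) + g(σ₁,σ₃)·p` where every monomial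
`S^aT^b` of `f` has `a+3b` even and every monomial `S^aT^b` of `g` has `a+3b` odd. -/
theorem Bring_invariants (τ : Bring ≃+* Bring)
    (h1 : τ (zB 0) = -zB 2) (h2 : τ (zB 1) = -zB 0) (h3 : τ (zB 2) = -zB 1) :
    AlgebraicIndependent ℤ ![σ₁B, σ₃B] ∧
    (∀ f g : MvPolynomial (Fin 2) ℤ, evB f + evB g * pB = 0 → f = 0 ∧ g = 0) ∧
    (∀ x : Bring, τ x = x ↔
      ∃ f g : MvPolynomial (Fin 2) ℤ,
        (∀ m ∈ f.support, Even (m 0 + 3 * m 1)) ∧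
        (∀ m ∈ g.support, Odd (m 0 + 3 * m 1)) ∧
        x = evB f + evB g * pB) := by
  have hτ (f : Base) : τ (evB f) = evB (negVars f) := map_evB_eq_evB_negVars (τ := τ) h1 h2 h3 f
  have hp : τ pB = -pB := map_pB_eq_neg (τ := τ) h1 h2 h3
  refine ⟨algebraicIndependent_σ₁B_σ₃B, fun f g => eq_zero_of_evB_add_evB_mul_pB_eq_zero,
    fun x => ?_⟩
  simp only [← negVars_eq_self_iff_even_weight, ← negVars_eq_neg_iff_odd_weight]
  constructor
  · intro hx
    obtain ⟨f, g, rfl⟩ := exists_eq_evB_add_evB_mul_pB_of_cyclic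
      (ρ := (τ : Bring →+* Bring).comp τ) (b := x)
      (by simp [h1, h3]) (by simp [h1, h2]) (by simp [h2, h3]) (by simp [hx])
    have hfix : evB (negVars f) + evB (-negVars g) * pB = evB f + evB g * pB := by
      rw [← hx, map_add, map_mul, hτ, hτ, hp, evB_neg]
      ring
    obtain ⟨hf, hg⟩ := evB_add_evB_mul_pB_injective hfix
    exact ⟨f, g, hf, neg_eq_iff_eq_neg.1 hg, rfl⟩
  · rintro ⟨f, g, hf, hg, rfl⟩
    rw [map_add, map_mul, hτ, hτ, hp, hf, hg, evB_neg]
    ring
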